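/- arXiv:1110.0855 — 3 statements merged into one kernel-verified Lean document; each statement's English description precedes it below -/
import Mathlib

section
/- (Partial contraction via a virtual system.) Let f : ℝⁿ × ℝ → ℝⁿ and let v : ℝⁿ × ℝⁿ × ℝ → ℝⁿ satisfy v(x, x, t) = f(x, t) for all x and t. Suppose there is c > 0 such that for all a, b, z ∈ ℝⁿ and almost every t ≥ t₀, ⟨v(a,z,t) − v(b,z,t), a − b⟩ ≤ −c‖a − b‖² (the virtual system ẏ = v(y, z, t) is contracting in y uniformly in the input z). Let x be a Caratheodory solution of ẋ = f(x,t) and let y be a Caratheodory solution of ẏ = v(y, x(t), t). Then ‖x(t) − y(t)‖ ≤ e^{−c(t−t₀)} ‖x(t₀) − y(t₀)‖ for all t ≥ t₀; in particular every solution of ẋ = f(x,t) converges exponentially to the corresponding trajectory of the contracting virtual system. -/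
/-!
The difference `u = x - y` is the primitive of `w(τ) = v(x τ, x τ, τ) - v(y τ, x τ, τ)`, because
`v(x, x, τ) = f(x, τ)`. Hence `u` is absolutely continuous, and so is `‖u‖²`, whose derivative
`2⟪u, w⟫` is at most `-2c‖u‖²` almost everywhere by the contraction of the virtual system with
input `z = x τ`. Then `e^{2cτ}‖u τ‖²` is absolutely continuous with almost everywhere nonpositive
derivative, so it is nonincreasing by the fundamental theorem of calculus for absolutely continuous
functions; taking square roots gives the claim.
-/

open scoped RealInnerProductSpace
open MeasureTheory

noncomputable section

/-- A Caratheodory solution of `ż = g(t, z)` on `[t₀, ∞)`. -/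
def IsCaratheodorySol {E : Type*} [NormedAddCommGroup E] [NormedSpace ℝ E]
    (g : ℝ → E → E) (t₀ : ℝ) (z : ℝ → E) : Prop :=
  ContinuousOn z (Set.Ici t₀) ∧
  ∀ t, t₀ ≤ t →
    IntervalIntegrable (fun τ => g τ (z τ)) volume t₀ t ∧
    z t = z t₀ + ∫ τ in t₀..t, g τ (z τ)

open Set Filter

namespace AbsolutelyContinuousOnInterval

variable {a b : ℝ}

theorem of_dist_le_mul {X Y : Type*} [PseudoMetricSpace X] [PseudoMetricSpace Y]
    {f : ℝ → X} {g : ℝ → Y} (hg : AbsolutelyContinuousOnInterval g a b) (K : ℝ)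
    (hfg : ∀ x ∈ uIcc a b, ∀ y ∈ uIcc a b, dist (f x) (f y) ≤ K * dist (g x) (g y)) :
    AbsolutelyContinuousOnInterval f a b := by
  unfold AbsolutelyContinuousOnInterval at hg ⊢
  have hKg := hg.const_mul K
  rw [mul_zero] at hKg
  refine squeeze_zero' (Eventually.of_forall fun E => Finset.sum_nonneg fun _ _ => dist_nonneg)
    ?_ hKg
  filter_upwards [mem_inf_of_right (mem_principal_self _)] with E hE
  rw [Finset.mul_sum]
  exact Finset.sum_le_sum fun i hi => hfg _ (hE.1 i hi).1 _ (hE.1 i hi).2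

theorem norm_sq {F : Type*} [SeminormedAddCommGroup F] {u : ℝ → F}
    (hu : AbsolutelyContinuousOnInterval u a b) :
    AbsolutelyContinuousOnInterval (fun x => ‖u x‖ ^ 2) a b := by
  obtain ⟨M, hM⟩ := hu.exists_bound
  refine hu.of_dist_le_mul (2 * M) fun x hx y hy => ?_
  rw [Real.dist_eq, dist_eq_norm, sq_sub_sq, abs_mul, abs_of_nonneg (by positivity)]
  exact mul_le_mul (by linarith [hM x hx, hM y hy]) (abs_norm_sub_norm_le _ _) (abs_nonneg _)
    (by linarith [norm_nonneg (u x), hM x hx])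

theorem le_mul_exp_of_ae_hasDerivAt_le {f f' : ℝ → ℝ} {K : ℝ} (hab : a ≤ b)
    (hf : AbsolutelyContinuousOnInterval f a b)
    (hf' : ∀ᵐ x, x ∈ Ioo a b → HasDerivAt f (f' x) x ∧ f' x ≤ K * f x) :
    f b ≤ f a * Real.exp (K * (b - a)) := by
  set φ : ℝ → ℝ := fun x => Real.exp (-(K * x)) * f x
  have hφ : AbsolutelyContinuousOnInterval φ a b :=
    (ContDiffOn.absolutelyContinuousOnInterval (by fun_prop)).fun_mul hf
  have hφ' : ∀ᵐ x ∂volume.restrict (Icc a b), 0 ≤ -deriv φ x := by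
    rw [← Measure.restrict_congr_set Ioo_ae_eq_Icc, ae_restrict_iff' measurableSet_Ioo]
    filter_upwards [hf'] with x hx hxab
    obtain ⟨hderiv, hle⟩ := hx hxab
    have hexp : HasDerivAt (fun x => Real.exp (-(K * x))) (Real.exp (-(K * x)) * -K) x := by
      simpa using ((hasDerivAt_id x).const_mul K).neg.exp
    rw [(hexp.fun_mul hderiv).deriv]
    nlinarith [Real.exp_pos (-(K * x))]
  have hφab : φ b ≤ φ a := by
    have := intervalIntegral.integral_nonneg_of_ae_restrict hab hφ'
    rw [intervalIntegral.integral_neg, hφ.integral_deriv_eq_sub] at this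
    linarith
  calc f b = Real.exp (K * b) * φ b := by simp [φ, ← mul_assoc, ← Real.exp_add]
    _ ≤ Real.exp (K * b) * φ a := by gcongr
    _ = f a * Real.exp (K * (b - a)) := by
      simp only [φ, mul_sub, Real.exp_sub, Real.exp_neg]
      field_simp

end AbsolutelyContinuousOnInterval

section Primitive

variable {E : Type*} [NormedAddCommGroup E] [NormedSpace ℝ E] {u w : ℝ → E} {a b : ℝ}

theorem absolutelyContinuousOnInterval_of_eq_add_integral (hab : a ≤ b)
    (hw : IntervalIntegrable w volume a b) (hu : ∀ x ∈ Icc a b, u x = u a + ∫ σ in a..x, w σ) :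
    AbsolutelyContinuousOnInterval u a b := by
  rw [← uIcc_of_le hab] at hu
  refine (hw.norm.absolutelyContinuousOnInterval_intervalIntegral left_mem_uIcc).of_dist_le_mul 1
    fun x hx y hy => ?_
  have hwx := hw.mono_set (uIcc_subset_uIcc_left hx)
  have hwy := hw.mono_set (uIcc_subset_uIcc_left hy)
  rw [one_mul, hu x hx, hu y hy, dist_add_left, dist_eq_norm, Real.dist_eq,
    intervalIntegral.integral_interval_sub_left hwx hwy,
    intervalIntegral.integral_interval_sub_left hwx.norm hwy.norm]
  exact intervalIntegral.norm_integral_le_abs_integral_norm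

theorem ae_hasDerivAt_of_eq_add_integral [CompleteSpace E] (hab : a ≤ b)
    (hw : IntervalIntegrable w volume a b) (hu : ∀ x ∈ Icc a b, u x = u a + ∫ σ in a..x, w σ) :
    ∀ᵐ x, x ∈ Ioo a b → HasDerivAt u (w x) x := by
  filter_upwards [hw.ae_hasDerivAt_integral] with x hx hxab
  have hxab' : x ∈ uIcc a b := by rw [uIcc_of_le hab]; exact Ioo_subset_Icc_self hxab
  refine ((hx hxab' a left_mem_uIcc).const_add (u a)).congr_of_eventuallyEq ?_
  filter_upwards [Icc_mem_nhds hxab.1 hxab.2] using hu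

end Primitive

theorem partial_contraction_virtual_system_general
    {n : ℕ}
    (f : EuclideanSpace ℝ (Fin n) → ℝ → EuclideanSpace ℝ (Fin n))
    (v : EuclideanSpace ℝ (Fin n) → EuclideanSpace ℝ (Fin n) → ℝ →
      EuclideanSpace ℝ (Fin n))
    (hvf : ∀ x t, v x x t = f x t)
    (t₀ c : ℝ)
    (hcontr : ∀ᵐ t ∂(volume : Measure ℝ), t₀ ≤ t →
      ∀ a b z : EuclideanSpace ℝ (Fin n),
        ⟪v a z t - v b z t, a - b⟫ ≤ -c * ‖a - b‖ ^ 2)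
    (x y : ℝ → EuclideanSpace ℝ (Fin n))
    (hx : IsCaratheodorySol (fun t z => f z t) t₀ x)
    (hy : IsCaratheodorySol (fun t w => v w (x t) t) t₀ y) :
    ∀ t, t₀ ≤ t → ‖x t - y t‖ ≤ Real.exp (-c * (t - t₀)) * ‖x t₀ - y t₀‖ := by
  intro t ht
  set u := fun τ => x τ - y τ
  set w := fun τ => f (x τ) τ - v (y τ) (x τ) τ
  have hw : IntervalIntegrable w volume t₀ t := (hx.2 t ht).1.sub (hy.2 t ht).1
  have hu : ∀ τ ∈ Icc t₀ t, u τ = u t₀ + ∫ σ in t₀..τ, w σ := fun τ hτ => by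
    rw [intervalIntegral.integral_sub (hx.2 τ hτ.1).1 (hy.2 τ hτ.1).1]
    simp only [u, (hx.2 τ hτ.1).2, (hy.2 τ hτ.1).2]
    abel
  have hdecay : ∀ᵐ τ, τ ∈ Ioo t₀ t →
      HasDerivAt (fun τ => ‖u τ‖ ^ 2) (2 * ⟪u τ, w τ⟫) τ ∧ 2 * ⟪u τ, w τ⟫ ≤ -2 * c * ‖u τ‖ ^ 2 := by
    filter_upwards [ae_hasDerivAt_of_eq_add_integral ht hw hu, hcontr] with τ hderiv hτcontr hτ
    refine ⟨(hderiv hτ).norm_sq, ?_⟩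
    have := hτcontr hτ.1.le (x τ) (y τ) (x τ)
    rw [hvf, real_inner_comm] at this
    linarith
  have hsq := ((absolutelyContinuousOnInterval_of_eq_add_integral ht hw hu).norm_sq
    ).le_mul_exp_of_ae_hasDerivAt_le ht hdecay
  show ‖u t‖ ≤ Real.exp (-c * (t - t₀)) * ‖u t₀‖
  refine le_of_pow_le_pow_left₀ two_ne_zero (by positivity) (hsq.trans_eq ?_)
  rw [mul_pow, sq (Real.exp _), ← Real.exp_add]
  ring_nf

/-- Partial contraction via a virtual system: if the virtual system
`ẏ = v(y, z, t)` is contracting in `y` uniformly in the input `z`, and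
`v(x, x, t) = f(x, t)`, then every Caratheodory solution `x` of `ẋ = f(x, t)`
converges exponentially to the corresponding trajectory `y` of the virtual
system driven by `x`. -/
theorem partial_contraction_virtual_system
    {n : ℕ}
    (f : EuclideanSpace ℝ (Fin n) → ℝ → EuclideanSpace ℝ (Fin n))
    (v : EuclideanSpace ℝ (Fin n) → EuclideanSpace ℝ (Fin n) → ℝ →
      EuclideanSpace ℝ (Fin n))
    (hvf : ∀ x t, v x x t = f x t)
    (t₀ c : ℝ) (hc : 0 < c)
    (hcontr : ∀ᵐ t ∂(volume : Measure ℝ), t₀ ≤ t →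
      ∀ a b z : EuclideanSpace ℝ (Fin n),
        ⟪v a z t - v b z t, a - b⟫ ≤ -c * ‖a - b‖ ^ 2)
    (x y : ℝ → EuclideanSpace ℝ (Fin n))
    (hx : IsCaratheodorySol (fun t z => f z t) t₀ x)
    (hy : IsCaratheodorySol (fun t w => v w (x t) t) t₀ y) :
    ∀ t, t₀ ≤ t → ‖x t - y t‖ ≤ Real.exp (-c * (t - t₀)) * ‖x t₀ - y t₀‖ :=
  partial_contraction_virtual_system_general f v hvf t₀ c hcontr x y hx hy
end
end

section
/- (Stability of arbitrarily switched linear systems, ℓ^∞ matrix measure.) Let A : ℝ → M_n(ℝ) be a measurable, bounded matrix-valued function, and let c > 0 be such that for almost every t ≥ t₀ and every row index i, A(t)_{ii} + Σ_{j ≠ i} |A(t)_{ij}| ≤ −c (i.e., the matrix measure induced by the ℓ^∞ vector norm satisfies μ_∞(A(t)) ≤ −c). Then every Caratheodory solution x of ẋ = A(t)x satisfies ‖x(t)‖_∞ ≤ e^{−c(t−t₀)} ‖x(t₀)‖_∞ for all t ≥ t₀, where ‖v‖_∞ = maxᵢ |vᵢ|; in particular all solutions converge to the origin. -/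
/-!
Write `x z = x s + ∫ τ in s..z, A τ *ᵥ x τ`. Freezing `x τ` at `x s` gives
`x z ≈ (1 + B) *ᵥ x s` with `B = ∫ τ in s..z, A τ`. For `z - s` small the diagonal of `1 + B` is
nonnegative, so the `ℓ^∞` operator norm of `1 + B` is `1 + max_i (B i i + ∑_{j ≠ i} |B i j|)`,
which is at most `1 - c (z - s)`; continuity of `x` makes the freezing error `o(z - s)`.
Hence the upper right Dini derivative of `‖x‖` is at most `-c ‖x‖`, and Gronwall's inequality
gives the exponential bound.
-/

open MeasureTheory Matrix

noncomputable section

open Set Filter Topology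

/-- `μ_∞(A) = max_i A.rowMeasure i`. -/
def Matrix.rowMeasure {ι : Type*} [Fintype ι] [DecidableEq ι] (A : Matrix ι ι ℝ) (i : ι) : ℝ :=
  A i i + ∑ j ∈ Finset.univ.erase i, |A i j|

section MatrixBounds

variable {ι : Type*} [Fintype ι]

theorem Matrix.abs_mulVec_apply_le (P : Matrix ι ι ℝ) (v : ι → ℝ) (i : ι) :
    |(P *ᵥ v) i| ≤ (∑ j, |P i j|) * ‖v‖ := by
  rw [mulVec, dotProduct, Finset.sum_mul]
  refine (Finset.abs_sum_le_sum_abs _ _).trans (Finset.sum_le_sum fun j _ => ?_)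
  rw [abs_mul]
  exact mul_le_mul_of_nonneg_left (norm_le_pi_norm v j) (abs_nonneg _)

theorem Matrix.norm_mulVec_le_of_sum_abs_le {P : Matrix ι ι ℝ} {R : ℝ}
    (hP : ∀ i, ∑ j, |P i j| ≤ R) (v : ι → ℝ) : ‖P *ᵥ v‖ ≤ R * ‖v‖ := by
  rcases isEmpty_or_nonempty ι with _ | ⟨⟨i₀⟩⟩
  · simp [Subsingleton.elim v 0]
  · have hR : 0 ≤ R := (Finset.sum_nonneg fun j _ => abs_nonneg _).trans (hP i₀)
    refine (pi_norm_le_iff_of_nonneg (by positivity)).2 fun i => ?_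
    exact (P.abs_mulVec_apply_le v i).trans (by gcongr; exact hP i)

theorem Matrix.norm_add_mulVec_le [DecidableEq ι] {B : Matrix ι ι ℝ} {r : ℝ}
    (hdiag : ∀ i, -1 ≤ B i i) (hrow : ∀ i, B.rowMeasure i ≤ r) (v : ι → ℝ) :
    ‖v + B *ᵥ v‖ ≤ (1 + r) * ‖v‖ := by
  rw [show v + B *ᵥ v = (1 + B) *ᵥ v by rw [add_mulVec, one_mulVec]]
  refine norm_mulVec_le_of_sum_abs_le (fun i => ?_) v
  have hoff : ∑ j ∈ Finset.univ.erase i, |(1 + B) i j| = ∑ j ∈ Finset.univ.erase i, |B i j| :=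
    Finset.sum_congr rfl fun j hj => by
      rw [add_apply, one_apply_ne (Finset.ne_of_mem_erase hj).symm, zero_add]
  rw [← Finset.add_sum_erase _ _ (Finset.mem_univ i), hoff, add_apply, one_apply_eq,
    abs_of_nonneg (by linarith [hdiag i]), add_assoc]
  gcongr
  exact hrow i

end MatrixBounds

section PiIntegral

variable {ι : Type*} [Fintype ι] {E : Type*} [NormedAddCommGroup E] {f : ℝ → ι → E} {a b : ℝ}

theorem IntervalIntegrable.of_eval (hf : ∀ i, IntervalIntegrable (f · i) volume a b) :
    IntervalIntegrable f volume a b :=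
  ⟨Integrable.of_eval fun i => (hf i).1, Integrable.of_eval fun i => (hf i).2⟩

theorem intervalIntegral.eval_integral [NormedSpace ℝ E] [CompleteSpace E]
    (hf : ∀ i, IntervalIntegrable (f · i) volume a b) (i : ι) :
    (∫ τ in a..b, f τ) i = ∫ τ in a..b, f τ i := by
  simp only [intervalIntegral, Pi.sub_apply, MeasureTheory.eval_integral fun i => (hf i).1,
    MeasureTheory.eval_integral fun i => (hf i).2]

end PiIntegral

section MatrixIntegral

variable {ι : Type*} [Fintype ι] {A : ℝ → Matrix ι ι ℝ} {a b : ℝ}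

theorem IntervalIntegrable.mulVec_const_apply
    (hA : ∀ i j, IntervalIntegrable (fun τ => A τ i j) volume a b) (w : ι → ℝ) (i : ι) :
    IntervalIntegrable (fun τ => (A τ *ᵥ w) i) volume a b := by
  simpa only [mulVec, dotProduct, Finset.sum_fn] using
    IntervalIntegrable.sum Finset.univ fun j _ => (hA i j).mul_const (w j)

theorem IntervalIntegrable.mulVec_const
    (hA : ∀ i j, IntervalIntegrable (fun τ => A τ i j) volume a b) (w : ι → ℝ) :
    IntervalIntegrable (fun τ => A τ *ᵥ w) volume a b :=
  .of_eval (.mulVec_const_apply hA w)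

theorem intervalIntegral.integral_mulVec_const
    (hA : ∀ i j, IntervalIntegrable (fun τ => A τ i j) volume a b) (w : ι → ℝ) :
    ∫ τ in a..b, A τ *ᵥ w = (of fun i j => ∫ τ in a..b, A τ i j) *ᵥ w := by
  ext i
  rw [intervalIntegral.eval_integral (.mulVec_const_apply hA w)]
  simp only [mulVec, dotProduct, of_apply]
  rw [intervalIntegral.integral_finsetSum fun j _ => (hA i j).mul_const (w j)]
  simp only [intervalIntegral.integral_mul_const]

theorem rowMeasure_intervalIntegral_le [DecidableEq ι] (hab : a ≤ b)
    (hA : ∀ i j, IntervalIntegrable (fun τ => A τ i j) volume a b) (i : ι) :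
    (of fun i j => ∫ τ in a..b, A τ i j).rowMeasure i ≤ ∫ τ in a..b, (A τ).rowMeasure i := by
  have hoff : IntervalIntegrable (fun τ => ∑ j ∈ Finset.univ.erase i, |A τ i j|) volume a b :=
    by simpa only [Finset.sum_fn] using IntervalIntegrable.sum _ fun j _ => (hA i j).abs
  simp only [rowMeasure, of_apply]
  rw [intervalIntegral.integral_add (hA i i) hoff,
    intervalIntegral.integral_finsetSum fun j _ => (hA i j).abs]
  gcongr with j
  exact intervalIntegral.abs_integral_le_integral_abs hab

end MatrixIntegral

namespace IsCaratheodorySol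

variable {E : Type*} [NormedAddCommGroup E] [NormedSpace ℝ E] {g : ℝ → E → E} {t₀ s t : ℝ}
  {z : ℝ → E}

theorem intervalIntegrable (hz : IsCaratheodorySol g t₀ z) (hs : t₀ ≤ s) (ht : t₀ ≤ t) :
    IntervalIntegrable (fun τ => g τ (z τ)) volume s t :=
  (hz.2 s hs).1.symm.trans (hz.2 t ht).1

theorem sub_eq_integral (hz : IsCaratheodorySol g t₀ z) (hs : t₀ ≤ s) (ht : t₀ ≤ t) :
    z t - z s = ∫ τ in s..t, g τ (z τ) := by
  rw [(hz.2 t ht).2, (hz.2 s hs).2, add_sub_add_left_eq_sub]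
  exact intervalIntegral.integral_interval_sub_left (hz.2 t ht).1 (hz.2 s hs).1

end IsCaratheodorySol

theorem ContinuousWithinAt.eventually_forall_Ioc_dist_le {X : Type*} [PseudoMetricSpace X]
    {f : ℝ → X} {s η : ℝ} (hf : ContinuousWithinAt f (Ici s) s) (hη : 0 < η) :
    ∀ᶠ z in 𝓝[>] s, ∀ τ ∈ Ioc s z, dist (f τ) (f s) ≤ η := by
  obtain ⟨δ, hδ, hfδ⟩ := Metric.continuousWithinAt_iff.1 hf η hη
  filter_upwards [Ioo_mem_nhdsGT (lt_add_of_pos_right s hδ)] with z hz τ hτ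
  refine (hfδ hτ.1.le ?_).le
  rw [Real.dist_eq, abs_of_pos (sub_pos.2 hτ.1)]
  linarith [hτ.2, hz.2]

theorem Measurable.intervalIntegrable_of_abs_le {f : ℝ → ℝ} {C : ℝ} (hf : Measurable f)
    (hC : ∀ t, |f t| ≤ C) (a b : ℝ) : IntervalIntegrable f volume a b :=
  (intervalIntegrable_const (c := C)).mono_fun hf.aestronglyMeasurable.restrict
    (.of_forall fun t => (hC t).trans (le_abs_self C))

theorem le_exp_mul_of_eventually_le {f : ℝ → ℝ} {K a b : ℝ} (hf : ContinuousOn f (Icc a b))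
    (hab : a ≤ b)
    (hf' : ∀ s ∈ Ico a b, ∀ ε > 0, ∀ᶠ z in 𝓝[>] s, f z ≤ f s + (K * f s + ε) * (z - s)) :
    f b ≤ Real.exp (K * (b - a)) * f a := by
  have hslope : ∀ s ∈ Ico a b, ∀ r, K * f s < r →
      ∃ᶠ z in 𝓝[>] s, (z - s)⁻¹ * (f z - f s) < r := by
    intro s hs r hr
    refine Filter.Eventually.frequently ?_
    filter_upwards [hf' s hs ((r - K * f s) / 2) (by linarith), self_mem_nhdsWithin]
      with z hz (hsz : s < z)
    rw [inv_mul_lt_iff₀ (sub_pos.2 hsz)]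
    nlinarith [sub_pos.2 hsz]
  have := le_gronwallBound_of_liminf_deriv_right_le (ε := 0) hf hslope le_rfl
    (fun _ _ => (add_zero _).ge) b (right_mem_Icc.2 hab)
  rwa [gronwallBound_ε0, mul_comm] at this

section SwitchedLinear

variable {ι : Type*} [Fintype ι] {A : ℝ → Matrix ι ι ℝ} {a b M : ℝ}

theorem norm_intervalIntegral_mulVec_le {v : ℝ → ι → ℝ} {η : ℝ} (hab : a ≤ b) (hM₀ : 0 ≤ M)
    (hM : ∀ τ i j, |A τ i j| ≤ M) (hv : ∀ τ ∈ Ioc a b, ‖v τ‖ ≤ η) :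
    ‖∫ τ in a..b, A τ *ᵥ v τ‖ ≤ Fintype.card ι * M * η * (b - a) := by
  have hrow : ∀ τ i, ∑ j, |A τ i j| ≤ Fintype.card ι * M := fun τ i => by
    simpa using Finset.sum_le_sum fun j (_ : j ∈ Finset.univ) => hM τ i j
  have hbound : ∀ τ ∈ uIoc a b, ‖A τ *ᵥ v τ‖ ≤ Fintype.card ι * M * η := fun τ hτ => by
    rw [uIoc_of_le hab] at hτ
    exact (norm_mulVec_le_of_sum_abs_le (hrow τ) _).trans (by gcongr; exact hv τ hτ)
  simpa [abs_of_nonneg (sub_nonneg.2 hab)] using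
    intervalIntegral.norm_integral_le_of_norm_le_const hbound

theorem intervalIntegral_rowMeasure_le_of_ae_le [DecidableEq ι] {c t₀ : ℝ} (hab : a ≤ b)
    (ha : t₀ ≤ a) (hA : ∀ i j, IntervalIntegrable (fun τ => A τ i j) volume a b)
    (hμ : ∀ᵐ t ∂(volume : Measure ℝ), t₀ ≤ t → ∀ i, (A t).rowMeasure i ≤ -c) (i : ι) :
    ∫ τ in a..b, (A τ).rowMeasure i ≤ -c * (b - a) := by
  have hint : IntervalIntegrable (fun τ => (A τ).rowMeasure i) volume a b :=
    (hA i i).add (by simpa only [Finset.sum_fn] using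
      IntervalIntegrable.sum _ fun j _ => (hA i j).abs)
  have hae : (fun τ => (A τ).rowMeasure i) ≤ᵐ[volume.restrict (Icc a b)] fun _ => -c := by
    filter_upwards [ae_restrict_of_ae hμ, ae_restrict_mem measurableSet_Icc] with τ hτ hτab
    exact hτ (ha.trans hτab.1) i
  calc ∫ τ in a..b, (A τ).rowMeasure i ≤ ∫ _ in a..b, -c :=
        intervalIntegral.integral_mono_ae_restrict hab hint intervalIntegrable_const hae
    _ = -c * (b - a) := by simp [mul_comm]

theorem IsCaratheodorySol.sub_eq_integral_mulVec_sub {x : ℝ → ι → ℝ} {t₀ : ℝ}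
    (hx : IsCaratheodorySol (fun t z => A t *ᵥ z) t₀ x)
    (hA : ∀ i j, IntervalIntegrable (fun τ => A τ i j) volume a b) (ha : t₀ ≤ a) (hab : a ≤ b) :
    x b - (x a + (of fun i j => ∫ τ in a..b, A τ i j) *ᵥ x a) =
      ∫ τ in a..b, A τ *ᵥ (x τ - x a) := by
  simp only [mulVec_sub]
  rw [← sub_sub, hx.sub_eq_integral ha (ha.trans hab),
    ← intervalIntegral.integral_mulVec_const hA,
    intervalIntegral.integral_sub (hx.intervalIntegrable ha (ha.trans hab)) (.mulVec_const hA _)]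

theorem IsCaratheodorySol.eventually_norm_le [DecidableEq ι] {x : ℝ → ι → ℝ} {c t₀ s ε : ℝ}
    (hmeas : ∀ i j, Measurable fun t => A t i j) (hM₀ : 0 ≤ M) (hM : ∀ t i j, |A t i j| ≤ M)
    (hμ : ∀ᵐ t ∂(volume : Measure ℝ), t₀ ≤ t → ∀ i, (A t).rowMeasure i ≤ -c)
    (hx : IsCaratheodorySol (fun t z => A t *ᵥ z) t₀ x) (hs : t₀ ≤ s) (hε : 0 < ε) :
    ∀ᶠ z in 𝓝[>] s, ‖x z‖ ≤ ‖x s‖ + (-c * ‖x s‖ + ε) * (z - s) := by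
  set η := ε / (Fintype.card ι * M + 1)
  have hMη : Fintype.card ι * M * η ≤ ε := by
    calc Fintype.card ι * M * η ≤ (Fintype.card ι * M + 1) * η := by gcongr; linarith
      _ = ε := mul_div_cancel₀ _ (by positivity)
  have hclose : ∀ᶠ z in 𝓝[>] s, ∀ τ ∈ Ioc s z, dist (x τ) (x s) ≤ η :=
    ((hx.1 s hs).mono (Ici_subset_Ici.2 hs)).eventually_forall_Ioc_dist_le (by positivity)
  have hshort : ∀ᶠ z in 𝓝[>] s, M * (z - s) ≤ 1 :=
    (((by fun_prop : Continuous fun z => M * (z - s)).tendsto' s 0 (by simp)).mono_left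
      nhdsWithin_le_nhds).eventually (eventually_le_nhds one_pos)
  filter_upwards [hclose, hshort, self_mem_nhdsWithin] with z hclose hshort (hsz : s < z)
  have hA : ∀ i j, IntervalIntegrable (fun τ => A τ i j) volume s z := fun i j =>
    (hmeas i j).intervalIntegrable_of_abs_le (fun τ => hM τ i j) s z
  set B := of fun i j => ∫ τ in s..z, A τ i j
  have hdiag : ∀ i, -1 ≤ B i i := fun i => by
    change -1 ≤ ∫ τ in s..z, A τ i i
    have := intervalIntegral.norm_integral_le_of_norm_le_const fun τ (_ : τ ∈ uIoc s z) =>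
      (Real.norm_eq_abs _).trans_le (hM τ i i)
    rw [Real.norm_eq_abs, abs_of_pos (sub_pos.2 hsz)] at this
    linarith [neg_abs_le (∫ τ in s..z, A τ i i)]
  have hrow : ∀ i, B.rowMeasure i ≤ -c * (z - s) := fun i =>
    (rowMeasure_intervalIntegral_le hsz.le hA i).trans
      (intervalIntegral_rowMeasure_le_of_ae_le hsz.le hs hA hμ i)
  have herr := norm_intervalIntegral_mulVec_le hsz.le hM₀ hM fun τ hτ =>
    (dist_eq_norm (x τ) (x s)).symm.trans_le (hclose τ hτ)
  calc ‖x z‖ ≤ ‖x s + B *ᵥ x s‖ + ‖x z - (x s + B *ᵥ x s)‖ := norm_le_norm_add_norm_sub' _ _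
    _ ≤ (1 + -c * (z - s)) * ‖x s‖ + Fintype.card ι * M * η * (z - s) := by
      rw [hx.sub_eq_integral_mulVec_sub hA hs hsz.le]
      exact add_le_add (norm_add_mulVec_le hdiag hrow _) herr
    _ ≤ ‖x s‖ + (-c * ‖x s‖ + ε) * (z - s) := by nlinarith [sub_pos.2 hsz]

end SwitchedLinear

theorem switched_linear_stability_muInf_general
    {n : ℕ}
    (A : ℝ → Matrix (Fin n) (Fin n) ℝ)
    (hmeas : ∀ i j, Measurable fun t => A t i j)
    (hbdd : ∃ M : ℝ, ∀ t i j, |A t i j| ≤ M)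
    (t₀ c : ℝ)
    (hμ : ∀ᵐ t ∂(volume : Measure ℝ), t₀ ≤ t → ∀ i : Fin n,
      A t i i + ∑ j ∈ Finset.univ.erase i, |A t i j| ≤ -c)
    (x : ℝ → Fin n → ℝ)
    (hx : IsCaratheodorySol (fun t z => (A t).mulVec z) t₀ x) :
    ∀ t, t₀ ≤ t → ‖x t‖ ≤ Real.exp (-c * (t - t₀)) * ‖x t₀‖ := by
  obtain ⟨M, hM⟩ := hbdd
  intro t ht
  refine le_exp_mul_of_eventually_le (hx.1.mono Icc_subset_Ici_self).norm ht
    fun s hs ε hε => ?_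
  exact hx.eventually_norm_le hmeas (le_max_right M 0)
    (fun τ i j => (hM τ i j).trans (le_max_left M 0)) hμ hs.1 hε

/-- Stability of arbitrarily switched linear systems (`ℓ^∞` matrix measure):
if the measurable bounded matrix function `A(t)` has `ℓ^∞`-matrix measure
`μ_∞(A(t)) = max_i (A(t)_{ii} + Σ_{j ≠ i} |A(t)_{ij}|) ≤ -c` for a.e. `t ≥ t₀`,
then every Caratheodory solution of `ẋ = A(t) x` decays exponentially to the
origin in the sup norm (the norm of `Fin n → ℝ`) with rate `c`. -/
theorem switched_linear_stability_muInf
    {n : ℕ}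
    (A : ℝ → Matrix (Fin n) (Fin n) ℝ)
    (hmeas : ∀ i j, Measurable fun t => A t i j)
    (hbdd : ∃ M : ℝ, ∀ t i j, |A t i j| ≤ M)
    (t₀ c : ℝ) (hc : 0 < c)
    (hμ : ∀ᵐ t ∂(volume : Measure ℝ), t₀ ≤ t → ∀ i : Fin n,
      A t i i + ∑ j ∈ Finset.univ.erase i, |A t i j| ≤ -c)
    (x : ℝ → Fin n → ℝ)
    (hx : IsCaratheodorySol (fun t z => (A t).mulVec z) t₀ x) :
    ∀ t, t₀ ≤ t → ‖x t‖ ≤ Real.exp (-c * (t - t₀)) * ‖x t₀‖ :=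
  switched_linear_stability_muInf_general A hmeas hbdd t₀ c hμ x hx
end
end

section
/- Let L : ℝ × ℝⁿ → M_n(ℝ) be such that the map (t,x) ↦ L(t,x)x is continuous (e.g. a piecewise-smooth continuous system of the form ẋ = L(t,x)x), and suppose there is c > 0 such that for all t, all z ∈ ℝⁿ and all v ∈ ℝⁿ, vᵀ L(t,z) v ≤ −c‖v‖². Then every Caratheodory solution x of ẋ = L(t,x)x satisfies ‖x(t)‖ ≤ e^{−c(t−t₀)} ‖x(t₀)‖ for all t ≥ t₀; consequently all solutions converge exponentially to the origin and hence towards each other, even though the system itself need not be contracting. -/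
open scoped RealInnerProductSpace
open MeasureTheory

noncomputable section

/-!
Along a solution, `d/dt ‖x‖² = 2 ⟪L(t, x) x, x⟫ ≤ -2c ‖x‖²`, so the integrating factor makes
`e^{2c(t - t₀)} ‖x(t)‖²` nonincreasing. Only the quadratic form of `L` at the current state enters,
which is why no contraction of the full system is needed. A Caratheodory solution is differentiable
on `(t₀, ∞)` because its integrand `τ ↦ L(τ, x τ) x τ` is continuous there.
-/

open Set Topology Real

theorem IsCaratheodorySol.hasDerivAt {E : Type*} [NormedAddCommGroup E] [NormedSpace ℝ E]
    [CompleteSpace E] {g : ℝ → E → E} {t₀ : ℝ} {z : ℝ → E}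
    (hz : IsCaratheodorySol g t₀ z) (hg : ContinuousOn (fun τ => g τ (z τ)) (Ici t₀))
    {t : ℝ} (ht : t₀ < t) : HasDerivAt z (g t (z t)) t := by
  have hnhds : Ici t₀ ∈ 𝓝 t := Ici_mem_nhds ht
  have hFTC : HasDerivAt (fun u => ∫ τ in t₀..u, g τ (z τ)) (g t (z t)) t :=
    intervalIntegral.integral_hasDerivAt_right (hz.2 t ht.le).1
      ((hg.mono Ioi_subset_Ici_self).stronglyMeasurableAtFilter isOpen_Ioi t ht)
      (hg.continuousAt hnhds)
  refine (hFTC.const_add (z t₀)).congr_of_eventuallyEq ?_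
  filter_upwards [hnhds] with u hu using (hz.2 u hu).2

theorem le_exp_mul_of_hasDerivAt_le_mul_self {φ φ' : ℝ → ℝ} {K t₀ : ℝ}
    (hφ : ContinuousOn φ (Ici t₀)) (hφ' : ∀ t, t₀ < t → HasDerivAt φ (φ' t) t)
    (hle : ∀ t, t₀ < t → φ' t ≤ K * φ t) {t : ℝ} (ht : t₀ ≤ t) :
    φ t ≤ exp (K * (t - t₀)) * φ t₀ := by
  have hanti : AntitoneOn (fun τ => exp (-K * (τ - t₀)) * φ τ) (Ici t₀) := by
    refine antitoneOn_of_hasDerivWithinAt_nonpos (convex_Ici t₀)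
      (f' := fun τ => exp (-K * (τ - t₀)) * (φ' τ - K * φ τ)) ?_ ?_ ?_
    · exact (continuous_exp.comp (by fun_prop)).continuousOn.mul hφ
    · intro τ hτ
      rw [interior_Ici] at hτ
      have hexp : HasDerivAt (fun τ => exp (-K * (τ - t₀))) (exp (-K * (τ - t₀)) * -K) τ :=
        (((hasDerivAt_id τ).sub_const t₀).const_mul (-K)).exp.congr_deriv (by simp)
      exact ((hexp.mul (hφ' τ hτ)).congr_deriv (by ring)).hasDerivWithinAt
    · intro τ hτ
      rw [interior_Ici] at hτ
      exact mul_nonpos_of_nonneg_of_nonpos (exp_pos _).le (sub_nonpos.2 (hle τ hτ))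
  have hdecay : exp (-K * (t - t₀)) * φ t ≤ φ t₀ := by
    simpa using hanti self_mem_Ici ht ht
  calc φ t = exp (K * (t - t₀)) * (exp (-K * (t - t₀)) * φ t) := by
        rw [← mul_assoc, ← exp_add, neg_mul, add_neg_cancel, exp_zero, one_mul]
    _ ≤ exp (K * (t - t₀)) * φ t₀ := mul_le_mul_of_nonneg_left hdecay (exp_pos _).le

theorem norm_le_exp_mul_of_inner_deriv_le {F : Type*} [NormedAddCommGroup F]
    [InnerProductSpace ℝ F] {z z' : ℝ → F} {c t₀ : ℝ} (hz : ContinuousOn z (Ici t₀))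
    (hz' : ∀ t, t₀ < t → HasDerivAt z (z' t) t)
    (hle : ∀ t, t₀ < t → ⟪z' t, z t⟫ ≤ -c * ‖z t‖ ^ 2) {t : ℝ} (ht : t₀ ≤ t) :
    ‖z t‖ ≤ exp (-c * (t - t₀)) * ‖z t₀‖ := by
  have hsq : ‖z t‖ ^ 2 ≤ exp (-2 * c * (t - t₀)) * ‖z t₀‖ ^ 2 :=
    le_exp_mul_of_hasDerivAt_le_mul_self (φ := fun s => ‖z s‖ ^ 2) (hz.norm.pow 2)
      (fun s hs => (hz' s hs).norm_sq)
      (fun s hs => by rw [real_inner_comm]; linarith [hle s hs]) ht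
  have hexp : exp (-2 * c * (t - t₀)) = exp (-c * (t - t₀)) ^ 2 := by
    rw [← exp_nat_mul]; ring_nf
  rw [hexp, ← mul_pow] at hsq
  exact (sq_le_sq₀ (norm_nonneg _) (by positivity)).1 hsq

theorem partial_contraction_state_dependent_linear_general
    {n : ℕ}
    (L : ℝ → EuclideanSpace ℝ (Fin n) → Matrix (Fin n) (Fin n) ℝ)
    (hcont : Continuous fun p : ℝ × EuclideanSpace ℝ (Fin n) =>
      Matrix.toEuclideanLin (L p.1 p.2) p.2)
    (c : ℝ)
    (hμ : ∀ (t : ℝ) (z : EuclideanSpace ℝ (Fin n)) (v : EuclideanSpace ℝ (Fin n)),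
      ⟪Matrix.toEuclideanLin (L t z) v, v⟫ ≤ -c * ‖v‖ ^ 2)
    (t₀ : ℝ) (x : ℝ → EuclideanSpace ℝ (Fin n))
    (hx : IsCaratheodorySol (fun t z => Matrix.toEuclideanLin (L t z) z) t₀ x) :
    ∀ t, t₀ ≤ t → ‖x t‖ ≤ Real.exp (-c * (t - t₀)) * ‖x t₀‖ := by
  have hflow : ContinuousOn (fun τ => Matrix.toEuclideanLin (L τ (x τ)) (x τ)) (Ici t₀) :=
    hcont.comp_continuousOn (f := fun τ => (τ, x τ)) (continuousOn_id.prodMk hx.1)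
  have hd : ∀ s, t₀ < s → HasDerivAt x (Matrix.toEuclideanLin (L s (x s)) (x s)) s :=
    fun s hs => hx.hasDerivAt hflow hs
  intro t ht
  exact norm_le_exp_mul_of_inner_deriv_le hx.1 hd (fun s _ => hμ s (x s) (x s)) ht

/-- Partial contraction for systems of the form `ẋ = L(t, x) x`: if
`vᵀ L(t, z) v ≤ -c ‖v‖²` for all `t`, `z` and `v` (i.e. `μ₂(L(t, z)) ≤ -c`),
then every Caratheodory solution of `ẋ = L(t, x) x` decays exponentially to
the origin with rate `c`, even though the system itself need not be
contracting. -/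
theorem partial_contraction_state_dependent_linear
    {n : ℕ}
    (L : ℝ → EuclideanSpace ℝ (Fin n) → Matrix (Fin n) (Fin n) ℝ)
    (hcont : Continuous fun p : ℝ × EuclideanSpace ℝ (Fin n) =>
      Matrix.toEuclideanLin (L p.1 p.2) p.2)
    (c : ℝ) (hc : 0 < c)
    (hμ : ∀ (t : ℝ) (z : EuclideanSpace ℝ (Fin n)) (v : EuclideanSpace ℝ (Fin n)),
      ⟪Matrix.toEuclideanLin (L t z) v, v⟫ ≤ -c * ‖v‖ ^ 2)
    (t₀ : ℝ) (x : ℝ → EuclideanSpace ℝ (Fin n))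
    (hx : IsCaratheodorySol (fun t z => Matrix.toEuclideanLin (L t z) z) t₀ x) :
    ∀ t, t₀ ≤ t → ‖x t‖ ≤ Real.exp (-c * (t - t₀)) * ‖x t₀‖ :=
  partial_contraction_state_dependent_linear_general L hcont c hμ t₀ x hx
end
end
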